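/- arXiv:2604.23482 — 2 statements merged into one kernel-verified Lean document; each statement's English description precedes it below -/
import Mathlib

section
/- Let t ≥ 2 be an even integer and let p_1, …, p_t, q be distinct primes with p_i ≡ 5 (mod 8) for all i and q ≡ 3 (mod 8); assume rank_{𝔽₂}(A_P) = t − 1 where P = p_1⋯p_t, and Legendre symbol (p_i/q) = 1 for all i. Order the prime factors of n = Pq as ℓ_1 = p_1, …, ℓ_t = p_t, ℓ_{t+1} = q, and let M be the Monsky matrix of n. Then rank_{𝔽₂}(M) = 2t (so the 2-Selmer rank s_n = 2(t+1) − rank_{𝔽₂}(M) equals 2), and for any v ∈ 𝔽₂^t with A_P v = 𝟏_t, the null space of M in 𝔽₂^{2t+2} is spanned by Ψ(P, P) = (𝟏_t, 0, 𝟏_t, 0) and the vector (v, 0, 𝟏_t + v, 0). -/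
/-!
Since every `p_i ≡ 1 (mod 4)`, reciprocity makes `A_P` symmetric and turns `(p_i / q) = 1` into
`(q / p_i) = 1`, so the matrix `A` of `Pq` is `A_P` bordered by zeros. As `2` is a non-residue
modulo all the primes and `-2` exactly modulo the `p_i`, the Monsky matrix sends `(x, a, y, b)`
to `(A_P x + x + y, a + b, x + A_P y + y, a)`, whose kernel over `𝔽₂` is
`{(x, 0, A_P x + x, 0) : A_P² x = 0}`. Rank `t - 1` and `A_P 𝟏 = 0` give `ker A_P = ⟨𝟏⟩`, hence
`A_P x ∈ {0, 𝟏}` and `x ∈ ⟨𝟏, v⟩`. By symmetry the image of `A_P` is `𝟏^⊥`, which contains `𝟏`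
because `t` is even; so such a `v` exists and the kernel of `M` is two-dimensional.
-/

open Finset

/-- The matrix `A` over `𝔽₂` attached to distinct odd primes `ℓ 0, …, ℓ (r-1)`:
off-diagonal entry `a_{ij}` is `1` iff the Legendre symbol `(ℓ j / ℓ i) = -1`,
and `a_{ii} = ∑_{j ≠ i} a_{ij}`. -/
noncomputable def APmat {r : ℕ} (ℓ : Fin r → ℕ) : Matrix (Fin r) (Fin r) (ZMod 2) :=
  fun i j =>
    if i = j then ∑ k ∈ univ.erase i, (if jacobiSym (ℓ k) (ℓ i) = -1 then (1 : ZMod 2) else 0)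
    else if jacobiSym (ℓ j) (ℓ i) = -1 then 1 else 0

/-- The diagonal matrix `D_l` with `(D_l)_{ii} = φ((l / ℓ i))`. -/
noncomputable def monskyD {r : ℕ} (l : ℤ) (ℓ : Fin r → ℕ) : Matrix (Fin r) (Fin r) (ZMod 2) :=
  Matrix.diagonal fun i => if jacobiSym l (ℓ i) = -1 then 1 else 0

/-- The Monsky matrix `[[A + D₂, D₂], [D₂, A + D₋₂]]` of the squarefree odd number
`ℓ 0 ⋯ ℓ (r-1)`. -/
noncomputable def monsky {r : ℕ} (ℓ : Fin r → ℕ) :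
    Matrix (Fin r ⊕ Fin r) (Fin r ⊕ Fin r) (ZMod 2) :=
  Matrix.fromBlocks (APmat ℓ + monskyD 2 ℓ) (monskyD 2 ℓ)
    (monskyD 2 ℓ) (APmat ℓ + monskyD (-2) ℓ)

/-- The exponent vector of a positive divisor `u` of `ℓ 0 ⋯ ℓ (r-1)`. -/
def expVec {r : ℕ} (ℓ : Fin r → ℕ) (u : ℕ) : Fin r → ZMod 2 :=
  fun i => if ℓ i ∣ u then 1 else 0

/-- `Ψ(u, u') = (ε(u), ε(u')) ∈ 𝔽₂^{2r}`. -/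
def psiVec {r : ℕ} (ℓ : Fin r → ℕ) (u u' : ℕ) : (Fin r ⊕ Fin r) → ZMod 2 :=
  Sum.elim (expVec ℓ u) (expVec ℓ u')

open Matrix

lemma jacobiSym_two_eq_neg_one {n : ℕ} (h : n % 8 = 3 ∨ n % 8 = 5) : jacobiSym 2 n = -1 := by
  rw [jacobiSym.at_two (Nat.odd_iff.mpr (by omega)), ZMod.χ₈_nat_eq_if_mod_eight,
    if_neg (by omega), if_neg (by omega)]

lemma jacobiSym_neg_two_eq_neg_one {n : ℕ} (h : n % 8 = 5) : jacobiSym (-2) n = -1 := by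
  rw [jacobiSym.at_neg_two (Nat.odd_iff.mpr (by omega)), ZMod.χ₈'_nat_eq_if_mod_eight,
    if_neg (by omega), if_neg (by omega)]

lemma jacobiSym_neg_two_eq_one {n : ℕ} (h : n % 8 = 3) : jacobiSym (-2) n = 1 := by
  rw [jacobiSym.at_neg_two (Nat.odd_iff.mpr (by omega)), ZMod.χ₈'_nat_eq_if_mod_eight,
    if_neg (by omega), if_pos (by omega)]

lemma jacobiSym_self_ne_neg_one (n : ℕ) : jacobiSym n n ≠ -1 := by
  rcases Nat.lt_or_ge n 2 with hn | hn
  · interval_cases n <;> simp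
  · have : NeZero n := ⟨by omega⟩
    rw [jacobiSym.eq_zero_iff_not_coprime.mpr (by rw [Int.gcd_self, Int.natAbs_natCast]; omega)]
    decide

lemma coprime_of_jacobiSym_eq_one {a q : ℕ} [NeZero q] (h : jacobiSym a q = 1) :
    a.Coprime q := by
  have hgcd : Int.gcd a q = 1 :=
    not_not.mp (jacobiSym.eq_zero_iff_not_coprime.not.mp (by rw [h]; decide))
  rwa [Int.gcd_natCast_natCast] at hgcd

lemma not_dvd_prod_of_jacobiSym_eq_one {ι : Type*} (s : Finset ι) (p : ι → ℕ) {q : ℕ}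
    (hq : 1 < q) (h : ∀ i ∈ s, jacobiSym (p i) q = 1) : ¬ q ∣ ∏ i ∈ s, p i := by
  have : NeZero q := ⟨by omega⟩
  have hcop : (∏ i ∈ s, p i).Coprime q :=
    Nat.Coprime.prod_left fun i hi => coprime_of_jacobiSym_eq_one (h i hi)
  exact fun hdvd => hq.ne' (hcop.symm.eq_one_of_dvd hdvd)

section APmat

variable {r : ℕ} (ℓ : Fin r → ℕ)

lemma APmat_apply_of_ne {i j : Fin r} (h : i ≠ j) :
    APmat ℓ i j = if jacobiSym (ℓ j) (ℓ i) = -1 then 1 else 0 :=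
  if_neg h

lemma APmat_apply_self (i : Fin r) :
    APmat ℓ i i = ∑ k, if jacobiSym (ℓ k) (ℓ i) = -1 then 1 else 0 :=
  (if_pos rfl).trans (sum_erase _ (if_neg (jacobiSym_self_ne_neg_one _)))

lemma APmat_mulVec_one : APmat ℓ *ᵥ 1 = 0 := by
  ext i
  have hrow : ∑ j ∈ univ.erase i, APmat ℓ i j = APmat ℓ i i :=
    (sum_congr rfl fun j hj => APmat_apply_of_ne ℓ (ne_of_mem_erase hj).symm).trans
      (if_pos rfl).symm
  simp only [mulVec, dotProduct, Pi.one_apply, mul_one, Pi.zero_apply]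
  rw [← add_sum_erase _ _ (mem_univ i), hrow, CharTwo.add_self_eq_zero]

lemma APmat_isSymm (hℓ : ∀ i, ℓ i % 4 = 1) : (APmat ℓ).IsSymm := by
  refine IsSymm.ext fun i j => ?_
  rcases eq_or_ne i j with rfl | h
  · rfl
  have hodd : Odd (ℓ i) := Nat.odd_iff.mpr (by have := hℓ i; omega)
  rw [APmat_apply_of_ne ℓ h, APmat_apply_of_ne ℓ h.symm,
    jacobiSym.quadratic_reciprocity_one_mod_four (hℓ j) hodd]

end APmat

section Snoc

variable {t : ℕ} {ℓ : Fin t → ℕ} {m : ℕ}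

lemma APmat_snoc_last_apply (h : ∀ i, jacobiSym (ℓ i) m ≠ -1) (j : Fin (t + 1)) :
    APmat (Fin.snoc ℓ m) (Fin.last t) j = 0 := by
  induction j using Fin.lastCases with
  | last =>
    rw [APmat_apply_self, Fin.sum_univ_castSucc]
    simp [h, jacobiSym_self_ne_neg_one]
  | cast j =>
    rw [APmat_apply_of_ne _ (Fin.castSucc_lt_last j).ne', Fin.snoc_castSucc, Fin.snoc_last,
      if_neg (h j)]

lemma APmat_snoc_castSucc_last {i : Fin t} (h : jacobiSym m (ℓ i) ≠ -1) :
    APmat (Fin.snoc ℓ m) i.castSucc (Fin.last t) = 0 := by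
  rw [APmat_apply_of_ne _ (Fin.castSucc_lt_last i).ne, Fin.snoc_castSucc, Fin.snoc_last,
    if_neg h]

lemma APmat_snoc_castSucc_castSucc {i : Fin t} (h : jacobiSym m (ℓ i) ≠ -1) (j : Fin t) :
    APmat (Fin.snoc ℓ m) i.castSucc j.castSucc = APmat ℓ i j := by
  rcases eq_or_ne i j with rfl | hij
  · rw [APmat_apply_self, APmat_apply_self, Fin.sum_univ_castSucc]
    simp [h]
  · rw [APmat_apply_of_ne _ hij, APmat_apply_of_ne _ (by simpa using hij)]
    simp

lemma APmat_snoc_mulVec_snoc (h₁ : ∀ i, jacobiSym (ℓ i) m ≠ -1)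
    (h₂ : ∀ i, jacobiSym m (ℓ i) ≠ -1) (x : Fin t → ZMod 2) (a : ZMod 2) :
    APmat (Fin.snoc ℓ m) *ᵥ Fin.snoc x a = Fin.snoc (APmat ℓ *ᵥ x) 0 := by
  ext i
  induction i using Fin.lastCases with
  | last => simp [mulVec, dotProduct, APmat_snoc_last_apply h₁]
  | cast i =>
    simp [mulVec, dotProduct, Fin.sum_univ_castSucc, APmat_snoc_castSucc_last (h₂ i),
      APmat_snoc_castSucc_castSucc (h₂ i)]

lemma monskyD_eq_one {r : ℕ} {l : ℤ} {ℓ : Fin r → ℕ} (h : ∀ i, jacobiSym l (ℓ i) = -1) :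
    monskyD l ℓ = 1 := by
  simp [monskyD, h]

lemma monskyD_snoc_mulVec_snoc {l : ℤ} (h₁ : ∀ i, jacobiSym l (ℓ i) = -1)
    (h₂ : jacobiSym l m ≠ -1) (x : Fin t → ZMod 2) (a : ZMod 2) :
    monskyD l (Fin.snoc ℓ m) *ᵥ Fin.snoc x a = Fin.snoc x 0 := by
  ext i
  induction i using Fin.lastCases <;> simp [monskyD, mulVec_diagonal, h₁, h₂]

end Snoc

section ElimSnoc

variable {t : ℕ}

lemma exists_eq_elim_snoc {α : Type*} (w : Fin (t + 1) ⊕ Fin (t + 1) → α) :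
    ∃ x a y b, w = Sum.elim (Fin.snoc x a) (Fin.snoc y b) :=
  ⟨Fin.init (w ∘ Sum.inl), w (Sum.inl (Fin.last t)), Fin.init (w ∘ Sum.inr),
    w (Sum.inr (Fin.last t)), by
      rw [← Sum.elim_comp_inl_inr w]
      exact congrArg₂ _ (Fin.snoc_init_self _).symm (Fin.snoc_init_self _).symm⟩

lemma elim_snoc_eq_zero_iff {α : Type*} [Zero α] {x y : Fin t → α} {a b : α} :
    Sum.elim (Fin.snoc x a) (Fin.snoc y b) = 0 ↔ x = 0 ∧ a = 0 ∧ y = 0 ∧ b = 0 := by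
  have h0 : (0 : Fin (t + 1) → α) = Fin.snoc 0 0 := by
    ext i; induction i using Fin.lastCases <;> simp
  rw [← Sum.elim_zero_zero, Sum.elim_eq_iff, h0, Fin.snoc_inj, Fin.snoc_inj, and_assoc]

lemma smul_elim_snoc_add_smul_elim_snoc {R M : Type*} [Semiring R] [AddCommMonoid M]
    [Module R M] (c d : R) (x y x' y' : Fin t → M) (a b a' b' : M) :
    c • Sum.elim (Fin.snoc x a) (Fin.snoc y b) + d • Sum.elim (Fin.snoc x' a') (Fin.snoc y' b') =
      Sum.elim (Fin.snoc (c • x + d • x') (c • a + d • a'))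
        (Fin.snoc (c • y + d • y') (c • b + d • b')) := by
  ext (i | i) <;> induction i using Fin.lastCases <;> simp

lemma linearIndependent_elim_snoc_pair [NeZero t] (v : Fin t → ZMod 2) :
    LinearIndependent (ZMod 2) ![Sum.elim (Fin.snoc 1 0) (Fin.snoc 1 0),
      Sum.elim (Fin.snoc v 0) (Fin.snoc (1 + v) 0)] := by
  rw [LinearIndependent.pair_iff]
  intro s c h
  rw [smul_elim_snoc_add_smul_elim_snoc, elim_snoc_eq_zero_iff] at h
  obtain ⟨h₁, -, h₂, -⟩ := h
  have hc : c • (1 : Fin t → ZMod 2) = 0 := by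
    rw [smul_add] at h₂
    grind
  obtain rfl : c = 0 := (smul_eq_zero.mp hc).resolve_right one_ne_zero
  rw [zero_smul, add_zero] at h₁
  exact ⟨(smul_eq_zero.mp h₁).resolve_right one_ne_zero, rfl⟩

end ElimSnoc

section LinearAlgebra

variable {K n : Type*} [Field K] [Fintype n]

lemma Matrix.rank_add_finrank_ker_mulVecLin {m : Type*} (A : Matrix m n K) :
    A.rank + Module.finrank K (LinearMap.ker A.mulVecLin) = Fintype.card n := by
  rw [Matrix.rank, LinearMap.finrank_range_add_finrank_ker, Module.finrank_fintype_fun_eq_card]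

lemma Matrix.ker_mulVecLin_eq_span_singleton {A : Matrix n n K} {u : n → K} (hu : u ≠ 0)
    (hAu : A *ᵥ u = 0) (hA : A.rank = Fintype.card n - 1) :
    LinearMap.ker A.mulVecLin = Submodule.span K {u} := by
  have hle : Submodule.span K {u} ≤ LinearMap.ker A.mulVecLin :=
    (Submodule.span_singleton_le_iff_mem _ _).mpr hAu
  have hpos := Submodule.finrank_mono hle
  rw [finrank_span_singleton hu] at hpos
  have hsum := A.rank_add_finrank_ker_mulVecLin
  refine (Submodule.eq_of_le_of_finrank_eq hle ?_).symm
  rw [finrank_span_singleton hu]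
  omega

lemma Matrix.range_mulVecLin_eq_ker_dotProduct [DecidableEq n] {A : Matrix n n K}
    (hA : A.IsSymm) {u : n → K} (hu : u ≠ 0) (hAu : A *ᵥ u = 0)
    (hrank : A.rank = Fintype.card n - 1) :
    LinearMap.range A.mulVecLin = LinearMap.ker (dotProductEquiv K n u) := by
  have hle : LinearMap.range A.mulVecLin ≤ LinearMap.ker (dotProductEquiv K n u) := by
    rintro _ ⟨x, rfl⟩
    rw [LinearMap.mem_ker, dotProductEquiv_apply_apply, mulVecLin_apply, dotProduct_mulVec,
      ← hA.eq, vecMul_transpose, hAu, zero_dotProduct]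
  have hf : dotProductEquiv K n u ≠ 0 := (LinearEquiv.map_ne_zero_iff _).mpr hu
  have hker := Module.Dual.finrank_ker_add_one_of_ne_zero hf
  rw [Module.finrank_fintype_fun_eq_card] at hker
  exact Submodule.eq_of_le_of_finrank_eq hle (by rw [← Matrix.rank]; omega)

lemma Matrix.exists_eq_smul_add_smul_of_mulVec_mulVec_eq_zero {R : Type*} [CommRing R]
    {A : Matrix n n R} {u v x : n → R} (hker : LinearMap.ker A.mulVecLin = Submodule.span R {u})
    (hv : A *ᵥ v = u) (hx : A *ᵥ (A *ᵥ x) = 0) :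
    ∃ c d : R, A *ᵥ x = c • u ∧ x = d • u + c • v := by
  have hAx : A *ᵥ x ∈ Submodule.span R {u} := hker ▸ hx
  obtain ⟨c, hc⟩ := Submodule.mem_span_singleton.mp hAx
  have hx' : x - c • v ∈ Submodule.span R {u} :=
    hker ▸ by simp [mulVec_sub, mulVec_smul, hv, hc]
  obtain ⟨d, hd⟩ := Submodule.mem_span_singleton.mp hx'
  exact ⟨c, d, hc.symm, by rw [hd]; abel⟩

lemma finrank_span_pair_eq_two {V : Type*} [AddCommGroup V] [Module K V] {x y : V}
    (h : LinearIndependent K ![x, y]) : Module.finrank K (Submodule.span K {x, y}) = 2 := by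
  have := finrank_span_eq_card h
  rwa [Matrix.range_cons, Matrix.range_cons, Matrix.range_empty, Set.union_empty,
    Set.union_singleton, Set.pair_comm, Fintype.card_fin] at this

end LinearAlgebra

section Monsky

variable {t : ℕ} {p : Fin t → ℕ} {q : ℕ}

lemma expVec_snoc_prod (hq : 1 < q) (hleg : ∀ i, jacobiSym (p i) q = 1) :
    expVec (Fin.snoc p q) (∏ i, p i) = Fin.snoc 1 0 := by
  have hq_not_dvd := not_dvd_prod_of_jacobiSym_eq_one univ p hq fun i _ => hleg i
  ext i
  induction i using Fin.lastCases <;> simp [expVec, hq_not_dvd, dvd_prod_of_mem]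

lemma monsky_snoc_mulVec_elim_snoc (hp5 : ∀ i, p i % 8 = 5) (hq3 : q % 8 = 3)
    (hleg : ∀ i, jacobiSym (p i) q = 1) (x y : Fin t → ZMod 2) (a b : ZMod 2) :
    monsky (Fin.snoc p q) *ᵥ Sum.elim (Fin.snoc x a) (Fin.snoc y b) =
      Sum.elim (Fin.snoc (APmat p *ᵥ x + x + y) (a + b))
        (Fin.snoc (x + (APmat p *ᵥ y + y)) a) := by
  have hleg' : ∀ i, jacobiSym q (p i) = 1 := fun i =>
    (jacobiSym.quadratic_reciprocity_one_mod_four (by have := hp5 i; omega)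
      (Nat.odd_iff.mpr (by omega))).symm.trans (hleg i)
  have hD₂ : monskyD 2 (Fin.snoc p q) = 1 := monskyD_eq_one fun i => by
    induction i using Fin.lastCases <;> simp [jacobiSym_two_eq_neg_one, hp5, hq3]
  have hA := APmat_snoc_mulVec_snoc (ℓ := p) (m := q) (fun i => by simp [hleg i])
    (fun i => by simp [hleg' i])
  have hDneg := monskyD_snoc_mulVec_snoc (l := -2) (ℓ := p) (m := q)
    (fun i => jacobiSym_neg_two_eq_neg_one (hp5 i)) (by simp [jacobiSym_neg_two_eq_one hq3])
  rw [monsky, fromBlocks_mulVec, Sum.elim_comp_inl, Sum.elim_comp_inr, hD₂, add_mulVec,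
    add_mulVec, one_mulVec, one_mulVec, hA, hA, hDneg]
  ext (i | i) <;> induction i using Fin.lastCases <;> simp

theorem ker_monsky_snoc [NeZero t] (hp5 : ∀ i, p i % 8 = 5) (hq3 : q % 8 = 3)
    (hleg : ∀ i, jacobiSym (p i) q = 1)
    (hker : LinearMap.ker (APmat p).mulVecLin = Submodule.span (ZMod 2) {1})
    {v : Fin t → ZMod 2} (hv : APmat p *ᵥ v = 1) :
    LinearMap.ker (monsky (Fin.snoc p q)).mulVecLin = Submodule.span (ZMod 2)
      {Sum.elim (Fin.snoc 1 0) (Fin.snoc 1 0), Sum.elim (Fin.snoc v 0) (Fin.snoc (1 + v) 0)} := by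
  ext w
  obtain ⟨x, a, y, b, rfl⟩ := exists_eq_elim_snoc w
  rw [LinearMap.mem_ker, mulVecLin_apply, monsky_snoc_mulVec_elim_snoc hp5 hq3 hleg,
    elim_snoc_eq_zero_iff, Submodule.mem_span_pair]
  simp only [smul_elim_snoc_add_smul_elim_snoc, Sum.elim_eq_iff, Fin.snoc_inj, smul_zero,
    add_zero]
  constructor
  · rintro ⟨hxy, hab, hyx, rfl⟩
    obtain rfl : APmat p *ᵥ x + x = y := CharTwo.add_eq_zero.mp hxy
    have hAAx : APmat p *ᵥ (APmat p *ᵥ x) = 0 := by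
      -- `(A + 1)² = A² + 1` in characteristic `2`
      rw [mulVec_add] at hyx
      grind
    obtain ⟨c, d, hc, rfl⟩ := exists_eq_smul_add_smul_of_mulVec_mulVec_eq_zero hker hv hAAx
    refine ⟨d, c, ⟨rfl, rfl⟩, ⟨?_, by simpa [eq_comm] using hab⟩⟩
    rw [hc]
    module
  · rintro ⟨d, c, ⟨rfl, rfl⟩, ⟨rfl, rfl⟩⟩
    simp only [mulVec_add, mulVec_smul, APmat_mulVec_one, hv, smul_zero, smul_add, zero_add]
    grind

end Monsky

theorem stmt7_general (t : ℕ) (ht : Even t) (ht2 : 2 ≤ t)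
    (p : Fin t → ℕ) (q : ℕ)
    (hp5 : ∀ i, p i % 8 = 5) (hq3 : q % 8 = 3)
    (hrank : (APmat p).rank = t - 1)
    (hleg : ∀ i, jacobiSym (p i) q = 1) :
    (monsky (Fin.snoc p q)).rank = 2 * t ∧
    psiVec (Fin.snoc p q) (∏ i, p i) (∏ i, p i) =
      Sum.elim (Fin.snoc (fun _ => 1) 0) (Fin.snoc (fun _ => 1) 0) ∧
    ∀ v : Fin t → ZMod 2, (APmat p).mulVec v = (fun _ => 1) →
      LinearMap.ker (monsky (Fin.snoc p q)).mulVecLin =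
        Submodule.span (ZMod 2)
          {psiVec (Fin.snoc p q) (∏ i, p i) (∏ i, p i),
           Sum.elim (Fin.snoc v 0) (Fin.snoc (fun i => 1 + v i) 0)} := by
  have : NeZero t := ⟨by omega⟩
  have hψ : psiVec (Fin.snoc p q) (∏ i, p i) (∏ i, p i) =
      Sum.elim (Fin.snoc 1 0) (Fin.snoc 1 0) := by
    rw [psiVec, expVec_snoc_prod (by omega) hleg]
  have hrank' : (APmat p).rank = Fintype.card (Fin t) - 1 := by rwa [Fintype.card_fin]
  have hkerA := ker_mulVecLin_eq_span_singleton one_ne_zero (APmat_mulVec_one p) hrank'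
  have hkerM := fun (v : Fin t → ZMod 2) (hv : APmat p *ᵥ v = 1) =>
    ker_monsky_snoc hp5 hq3 hleg hkerA hv
  have hAsymm := APmat_isSymm p fun i => by have := hp5 i; omega
  obtain ⟨v₀, hv₀⟩ : (1 : Fin t → ZMod 2) ∈ LinearMap.range (APmat p).mulVecLin := by
    rw [range_mulVecLin_eq_ker_dotProduct hAsymm one_ne_zero (APmat_mulVec_one p) hrank']
    simp [(ZMod.natCast_eq_zero_iff_even).mpr ht]
  refine ⟨?_, hψ, fun v hv => hψ ▸ hkerM v hv⟩
  have hdim := (monsky (Fin.snoc p q)).rank_add_finrank_ker_mulVecLin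
  rw [hkerM v₀ hv₀, finrank_span_pair_eq_two (linearIndependent_elim_snoc_pair v₀),
    Fintype.card_sum, Fintype.card_fin] at hdim
  omega

/-- For `n = p_1 ⋯ p_t q` with `t ≥ 2` even, `p_i ≡ 5 (mod 8)`, `q ≡ 3 (mod 8)`,
`rank A_P = t - 1` and `(p_i / q) = 1`, the Monsky matrix `M` of `n` (with the prime
factors ordered as `p_1, …, p_t, q`) has rank `2 t` (so the 2-Selmer rank is `2`),
and for any `v` with `A_P v = 𝟏_t` its null space is spanned by
`Ψ(P, P) = (𝟏_t, 0, 𝟏_t, 0)` and `(v, 0, 𝟏_t + v, 0)`. -/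
theorem stmt7 (t : ℕ) (ht : Even t) (ht2 : 2 ≤ t)
    (p : Fin t → ℕ) (q : ℕ)
    (hp : ∀ i, (p i).Prime) (hq : q.Prime)
    (hinj : Function.Injective p) (hpq : ∀ i, p i ≠ q)
    (hp5 : ∀ i, p i % 8 = 5) (hq3 : q % 8 = 3)
    (hrank : (APmat p).rank = t - 1)
    (hleg : ∀ i, jacobiSym (p i) q = 1) :
    (monsky (Fin.snoc p q)).rank = 2 * t ∧
    psiVec (Fin.snoc p q) (∏ i, p i) (∏ i, p i) =
      Sum.elim (Fin.snoc (fun _ => 1) 0) (Fin.snoc (fun _ => 1) 0) ∧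
    ∀ v : Fin t → ZMod 2, (APmat p).mulVec v = (fun _ => 1) →
      LinearMap.ker (monsky (Fin.snoc p q)).mulVecLin =
        Submodule.span (ZMod 2)
          {psiVec (Fin.snoc p q) (∏ i, p i) (∏ i, p i),
           Sum.elim (Fin.snoc v 0) (Fin.snoc (fun i => 1 + v i) 0)} :=
  stmt7_general t ht ht2 p q hp5 hq3 hrank hleg
end

section
/- Let t be an odd positive integer and let p_1, …, p_t, q be distinct primes with p_i ≡ 5 (mod 8) for all i and q ≡ 7 (mod 8), and suppose the Legendre symbol (q/p_i) = 1 for all i; set P = p_1⋯p_t. If there exist nonzero integers x, y, z, w with gcd(x, y) = 1 satisfying x² + Py² = z² and x² − Py² = qw², then the quartic residue symbol (q/P)_4 = −1, i.e., the number of indices i ∈ {1,…,t} with q^{(p_i−1)/4} ≡ −1 (mod p_i) is odd. -/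
/-!
Modulo each `p_i` the second equation gives `q ≡ (x / w)²`, so `(q / p_i)₄` is the Legendre
symbol `(x w / p_i)`, and the parity in question is decided by the Jacobi symbol `(x w / P)`.
Modulo 8 the equations force `x = 2 u` with `u` and `w` odd. Then `(2 / P) = -1` because
`P ≡ 5 (mod 8)`, while reciprocity (`P ≡ 1 (mod 4)`) turns `(u / P)` and `(w / P)` into
`(P / |u|)` and `(P / |w|)`, both `1` because `P y²` is a square modulo `u` (it is `z² - 4 u²`)
and modulo `w` (it is `x² - q w²`). Hence `(x w / P) = -1`.
-/

open Finset

theorem jacobiSym_prod_right {ι : Type*} (a : ℤ) {s : Finset ι} {f : ι → ℕ}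
    (hf : ∀ i ∈ s, f i ≠ 0) :
    jacobiSym a (∏ i ∈ s, f i) = ∏ i ∈ s, jacobiSym a (f i) := by
  induction s using Finset.cons_induction with
  | empty => simp
  | cons i s his ih =>
    rw [prod_cons, prod_cons, jacobiSym.mul_right' a (hf i (mem_cons_self i s))
        (prod_ne_zero_iff.2 fun j hj => hf j (mem_cons_of_mem hj)),
      ih fun j hj => hf j (mem_cons_of_mem hj)]

theorem odd_card_filter_eq_neg_one_of_prod_eq_neg_one {ι : Type*} {s : Finset ι} {f : ι → ℤ}
    (hf : ∀ i ∈ s, f i = 0 ∨ f i = 1 ∨ f i = -1) (h : ∏ i ∈ s, f i = -1) :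
    Odd #{i ∈ s | f i = -1} := by
  have hone : ∀ i ∈ s, ¬ f i = -1 → f i = 1 := by
    intro i hi hne
    rcases hf i hi with h0 | h1 | hm
    · simp [prod_eq_zero hi h0] at h
    · exact h1
    · exact absurd hm hne
  rw [← prod_filter_mul_prod_filter_not s (f · = -1),
    prod_congr rfl fun i hi => (mem_filter.1 hi).2, prod_const,
    prod_eq_one fun i hi => hone i (mem_filter.1 hi).1 (mem_filter.1 hi).2, mul_one] at h
  exact (neg_one_pow_eq_neg_one_iff_odd (by norm_num)).1 h

theorem prod_emod_eight_eq_five {ι : Type*} {s : Finset ι} {f : ι → ℕ} (hs : Odd #s)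
    (hf : ∀ i ∈ s, f i % 8 = 5) : (∏ i ∈ s, f i) % 8 = 5 := by
  obtain ⟨k, hk⟩ := hs
  rw [prod_nat_mod, prod_congr rfl hf, prod_const, hk, pow_succ, pow_mul, Nat.mul_mod, Nat.pow_mod]
  norm_num

theorem FiniteField.pow_card_sub_one_div_four_eq_pow_card_div_two {F : Type*} [Field F]
    [Fintype F] (hF : Fintype.card F % 4 = 1) {a x w : F} (h : a * w ^ 2 = x ^ 2) (hw : w ≠ 0) :
    a ^ ((Fintype.card F - 1) / 4) = (x * w) ^ (Fintype.card F / 2) := by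
  set k := (Fintype.card F - 1) / 4
  have hsub : Fintype.card F - 1 = 4 * k := by omega
  have hhalf : Fintype.card F / 2 = 2 * k := by omega
  calc a ^ k = a ^ k * w ^ (Fintype.card F - 1) := by
        rw [FiniteField.pow_card_sub_one_eq_one w hw, mul_one]
    _ = (a * w ^ 2) ^ k * w ^ (2 * k) := by rw [hsub]; ring
    _ = (x * w) ^ (Fintype.card F / 2) := by rw [h, hhalf]; ring

theorem pow_div_four_eq_neg_one_iff_jacobiSym {p : ℕ} [Fact p.Prime] (hp : p % 4 = 1)
    {a : ZMod p} {x w : ℤ} (h : a * (w : ZMod p) ^ 2 = (x : ZMod p) ^ 2)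
    (hw : (w : ZMod p) ≠ 0) :
    a ^ ((p - 1) / 4) = -1 ↔ jacobiSym (x * w) p = -1 := by
  have hcast : a ^ ((p - 1) / 4) = legendreSym p (x * w) := by
    rw [legendreSym.eq_pow, Int.cast_mul]
    simpa only [ZMod.card] using
      FiniteField.pow_card_sub_one_div_four_eq_pow_card_div_two (by rwa [ZMod.card]) h hw
  have : Fact (2 < p) := ⟨by have := (Fact.out : p.Prime).two_le; omega⟩
  rw [hcast, jacobiSym.legendreSym.to_jacobiSym]
  rcases jacobiSym.trichotomy (x * w) p with h0 | h1 | hm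
  · simp [h0]
  · simp [h1, (ZMod.neg_one_ne_one).symm]
  · simp [hm]

theorem emod_four_eq_two_and_odd_of_sq_add_of_sq_sub {P q x y z w : ℤ} (hP : P % 8 = 5)
    (hq : q % 8 = 7) (hxy : IsCoprime x y) (h₁ : x ^ 2 + P * y ^ 2 = z ^ 2)
    (h₂ : x ^ 2 - P * y ^ 2 = q * w ^ 2) : x % 4 = 2 ∧ w % 2 = 1 := by
  -- in `ZMod 8`, `4 * X = 0` says that `X` is even
  have key : ∀ X Y Z W : ZMod 8, X ^ 2 + 5 * Y ^ 2 = Z ^ 2 → X ^ 2 - 5 * Y ^ 2 = 7 * W ^ 2 →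
      4 * X = 0 ∧ 4 * Y = 0 ∨ 2 * X = 4 ∧ 4 * W = 4 := by decide
  have hcast (n : ℤ) : (n : ZMod 8) = (n % 8 : ℤ) := (ZMod.intCast_mod n 8).symm
  have toInt (a b : ℤ) (h : (a : ZMod 8) = b) : a % 8 = b % 8 :=
    (ZMod.intCast_eq_intCast_iff' a b 8).1 h
  have h₁' := congrArg (Int.cast : ℤ → ZMod 8) h₁
  have h₂' := congrArg (Int.cast : ℤ → ZMod 8) h₂
  push_cast [hcast P, hcast q, hP, hq] at h₁' h₂'
  rcases key _ _ _ _ h₁' h₂' with ⟨hx, hy⟩ | ⟨hx, hw⟩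
  · have hx := toInt (4 * x) 0 (by push_cast; exact hx)
    have hy := toInt (4 * y) 0 (by push_cast; exact hy)
    have h2 : IsUnit (2 : ℤ) := hxy.isUnit_of_dvd' (by omega) (by omega)
    norm_num [Int.isUnit_iff] at h2
  · have hx := toInt (2 * x) 4 (by push_cast; exact hx)
    have hw := toInt (4 * w) 4 (by push_cast; exact hw)
    omega

theorem not_dvd_mul_of_sq_sub_mul_sq_eq {p R q x y w : ℤ} (hp : Prime p) (hR : ¬p ∣ R)
    (hq : ¬p ∣ q) (hxy : IsCoprime x y) (h : x ^ 2 - p * R * y ^ 2 = q * w ^ 2) :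
    ¬p ∣ x * w := by
  have hpx_of_w : p ∣ w → p ∣ x := fun hw => hp.dvd_of_dvd_pow (n := 2) <| by
    rw [show x ^ 2 = p * R * y ^ 2 + q * w ^ 2 by linear_combination h]
    exact dvd_add ((dvd_mul_right p R).mul_right _) ((dvd_pow hw two_ne_zero).mul_left q)
  have hpw_of_x : p ∣ x → p ∣ w := fun hx => hp.dvd_of_dvd_pow <|
    (hp.dvd_or_dvd (h ▸ dvd_sub (dvd_pow hx two_ne_zero)
      ((dvd_mul_right p R).mul_right _))).resolve_left hq
  intro hxw
  have hx : p ∣ x := (hp.dvd_or_dvd hxw).elim id hpx_of_w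
  obtain ⟨a, ha⟩ := hx
  obtain ⟨b, hb⟩ := hpw_of_x ⟨a, ha⟩
  have hRy : p ∣ R * y ^ 2 :=
    ⟨a ^ 2 - q * b ^ 2, mul_left_cancel₀ hp.ne_zero (by subst ha hb; linear_combination -h)⟩
  rcases hp.dvd_or_dvd hRy with hR' | hy
  · exact hR hR'
  · exact hp.not_isUnit (hxy.isUnit_of_dvd' ⟨a, ha⟩ (hp.dvd_of_dvd_pow hy))

theorem not_dvd_prod_erase_of_injective {ι : Type*} [DecidableEq ι] {p : ι → ℕ}
    (hp : ∀ i, (p i).Prime) (hinj : Function.Injective p) (s : Finset ι) (i : ι) :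
    ¬p i ∣ ∏ j ∈ s.erase i, p j := by
  intro hdvd
  obtain ⟨j, hj, hij⟩ := ((hp i).prime.dvd_finsetProd_iff _).1 hdvd
  exact (mem_erase.1 hj).1 (hinj ((Nat.prime_dvd_prime_iff_eq (hp i) (hp j)).1 hij)).symm

theorem not_dvd_mul_of_sq_sub_prod_mul_sq_eq {ι : Type*} [Fintype ι] {p : ι → ℕ}
    (hp : ∀ i, (p i).Prime) (hinj : Function.Injective p) {q x y w : ℤ}
    (hq : ∀ i, ¬(p i : ℤ) ∣ q) (hxy : IsCoprime x y)
    (h : x ^ 2 - (∏ i, (p i : ℤ)) * y ^ 2 = q * w ^ 2) (i : ι) : ¬(p i : ℤ) ∣ x * w := by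
  classical
  refine not_dvd_mul_of_sq_sub_mul_sq_eq (R := ∏ j ∈ univ.erase i, (p j : ℤ))
    (Nat.prime_iff_prime_int.1 (hp i)) (mod_cast not_dvd_prod_erase_of_injective hp hinj univ i)
    (hq i) hxy ?_
  rwa [mul_prod_erase univ (fun j => (p j : ℤ)) (mem_univ i)]

theorem jacobiSym_eq_jacobiSym_natAbs_of_one_mod_four {a : ℤ} {b : ℕ} (ha : Odd a)
    (hb : b % 4 = 1) : jacobiSym a b = jacobiSym b a.natAbs := by
  have hrec := jacobiSym.quadratic_reciprocity_one_mod_four' (Int.natAbs_odd.2 ha) hb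
  obtain ⟨n, rfl | rfl⟩ := Int.eq_nat_or_neg a
  · simpa using hrec
  · rw [jacobiSym.neg _ (Nat.odd_iff.2 (by omega)), ZMod.χ₄_nat_one_mod_four hb, one_mul]
    simpa using hrec

theorem jacobiSym_natAbs_eq_one_of_mul_sq_modEq_sq {a y z m : ℤ}
    (h : a * y ^ 2 ≡ z ^ 2 [ZMOD m]) (hy : IsCoprime y m) (hz : IsCoprime z m) :
    jacobiSym a m.natAbs = 1 := by
  have hgcd {b : ℤ} (hb : IsCoprime b m) : b.gcd m.natAbs = 1 := by
    simpa [Int.gcd, Int.natAbs_abs] using Int.isCoprime_iff_gcd_eq_one.1 hb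
  have hmod := jacobiSym.mod_left' (b := m.natAbs) (Int.modEq_natAbs.2 h)
  rwa [jacobiSym.mul_left, jacobiSym.sq_one' (hgcd hy), jacobiSym.sq_one' (hgcd hz),
    mul_one] at hmod

theorem jacobiSym_mul_eq_neg_one_of_sq_add_of_sq_sub {P : ℕ} {q x y z w : ℤ} (hP : P % 8 = 5)
    (hq : q % 8 = 7) (hxy : IsCoprime x y) (hxP : IsCoprime x P)
    (h₁ : x ^ 2 + P * y ^ 2 = z ^ 2) (h₂ : x ^ 2 - P * y ^ 2 = q * w ^ 2) :
    jacobiSym (x * w) P = -1 := by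
  obtain ⟨hx, hw⟩ := emod_four_eq_two_and_odd_of_sq_add_of_sq_sub (by omega) hq hxy h₁ h₂
  have hP4 : P % 4 = 1 := by omega
  have hxPy : IsCoprime x (P * y ^ 2) := hxP.mul_right hxy.pow_right
  have hxz : IsCoprime x z := by
    have hz : z ^ 2 = P * y ^ 2 + x * x := by linear_combination -h₁
    exact (IsCoprime.pow_right_iff two_pos).1 (hz ▸ hxPy.add_mul_left_right x)
  have hxw : IsCoprime x w := by
    have hw : q * w ^ 2 = -(P * y ^ 2) + x * x := by linear_combination -h₂
    exact (IsCoprime.pow_right_iff two_pos).1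
      (hw ▸ hxPy.neg_right.add_mul_left_right x).of_mul_right_right
  have hyw : IsCoprime y w := by
    have hw : q * w ^ 2 = x ^ 2 + y * (-(P * y)) := by linear_combination -h₂
    exact (IsCoprime.pow_right_iff two_pos).1
      (hw ▸ hxy.symm.pow_right.add_mul_left_right _).of_mul_right_right
  obtain ⟨u, rfl, hu⟩ : ∃ u, x = 2 * u ∧ Odd u := ⟨x / 2, by omega, Int.odd_iff.2 (by omega)⟩
  have hJ2 : jacobiSym 2 P = -1 := by
    rw [jacobiSym.at_two (Nat.odd_iff.2 (by omega)), ZMod.χ₈_nat_mod_eight, hP]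
    rfl
  have hJu : jacobiSym u P = 1 := by
    rw [jacobiSym_eq_jacobiSym_natAbs_of_one_mod_four hu hP4]
    exact jacobiSym_natAbs_eq_one_of_mul_sq_modEq_sq (y := y) (z := z)
      (Int.modEq_iff_dvd.2 ⟨4 * u, by linear_combination -h₁⟩) hxy.of_mul_left_right.symm
      hxz.of_mul_left_right.symm
  have hJw : jacobiSym w P = 1 := by
    rw [jacobiSym_eq_jacobiSym_natAbs_of_one_mod_four (Int.odd_iff.2 hw) hP4]
    exact jacobiSym_natAbs_eq_one_of_mul_sq_modEq_sq (y := y) (z := 2 * u)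
      (Int.modEq_iff_dvd.2 ⟨q * w, by linear_combination h₂⟩) hyw hxw
  rw [mul_assoc, jacobiSym.mul_left, jacobiSym.mul_left, hJ2, hJu, hJw]
  norm_num

theorem stmt13_general (t : ℕ) (ht : Odd t)
    (p : Fin t → ℕ) (q : ℕ)
    (hp : ∀ i, (p i).Prime) (hq : q.Prime)
    (hinj : Function.Injective p) (hpq : ∀ i, p i ≠ q)
    (hp5 : ∀ i, p i % 8 = 5) (hq7 : q % 8 = 7)
    (x y z w : ℤ)
    (hgcd : Int.gcd x y = 1)
    (heq1 : x ^ 2 + (∏ i, (p i : ℤ)) * y ^ 2 = z ^ 2)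
    (heq2 : x ^ 2 - (∏ i, (p i : ℤ)) * y ^ 2 = (q : ℤ) * w ^ 2) :
    Odd (univ.filter fun i => (q : ZMod (p i)) ^ ((p i - 1) / 4) = -1).card := by
  have hxy : IsCoprime x y := Int.isCoprime_iff_gcd_eq_one.2 hgcd
  have hxw := not_dvd_mul_of_sq_sub_prod_mul_sq_eq hp hinj (q := q)
    (fun i => mod_cast (Nat.prime_dvd_prime_iff_eq (hp i) hq).not.2 (hpq i)) hxy heq2
  have hxP : IsCoprime x (∏ i, p i : ℕ) := by
    push_cast
    exact IsCoprime.prod_right fun i _ => ((Nat.prime_iff_prime_int.1 (hp i)).coprime_iff_not_dvd.2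
      fun h => hxw i (h.mul_right w)).symm
  have hJ : jacobiSym (x * w) (∏ i, p i) = -1 := jacobiSym_mul_eq_neg_one_of_sq_add_of_sq_sub
    (prod_emod_eight_eq_five (by simpa using ht) fun i _ => hp5 i) (q := q) (by omega) hxy hxP
    (by push_cast; exact heq1) (by push_cast; exact heq2)
  rw [jacobiSym_prod_right _ fun i _ => (hp i).ne_zero] at hJ
  have hquartic (i : Fin t) :
      (q : ZMod (p i)) ^ ((p i - 1) / 4) = -1 ↔ jacobiSym (x * w) (p i) = -1 := by
    have := Fact.mk (hp i)
    refine pow_div_four_eq_neg_one_iff_jacobiSym (by have := hp5 i; omega) ?_ ?_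
    · have hP : ∏ j, (p j : ZMod (p i)) = 0 := prod_eq_zero (mem_univ i) (ZMod.natCast_self _)
      have h := congrArg (Int.cast : ℤ → ZMod (p i)) heq2
      push_cast [hP] at h
      linear_combination -h
    · exact (ZMod.intCast_zmod_eq_zero_iff_dvd w (p i)).not.2 fun h => hxw i (h.mul_left x)
  rw [filter_congr fun i _ => hquartic i]
  exact odd_card_filter_eq_neg_one_of_prod_eq_neg_one (fun i _ => jacobiSym.trichotomy _ _) hJ

/-- Let `t` be odd and `p_1, …, p_t, q` distinct primes with `p_i ≡ 5 (mod 8)`,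
`q ≡ 7 (mod 8)` and Legendre symbol `(q / p_i) = 1` for all `i`; set `P = p_1 ⋯ p_t`.
If there are nonzero integers `x, y, z, w` with `gcd(x, y) = 1` satisfying
`x² + P y² = z²` and `x² − P y² = q w²`, then the quartic residue symbol
`(q / P)₄ = -1`, i.e. the number of indices `i` with
`q^((p_i - 1)/4) ≡ -1 (mod p_i)` is odd. -/
theorem stmt13 (t : ℕ) (ht : Odd t)
    (p : Fin t → ℕ) (q : ℕ)
    (hp : ∀ i, (p i).Prime) (hq : q.Prime)
    (hinj : Function.Injective p) (hpq : ∀ i, p i ≠ q)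
    (hp5 : ∀ i, p i % 8 = 5) (hq7 : q % 8 = 7)
    (hleg : ∀ i, jacobiSym q (p i) = 1)
    (x y z w : ℤ) (hx : x ≠ 0) (hy : y ≠ 0) (hz : z ≠ 0) (hw : w ≠ 0)
    (hgcd : Int.gcd x y = 1)
    (heq1 : x ^ 2 + (∏ i, (p i : ℤ)) * y ^ 2 = z ^ 2)
    (heq2 : x ^ 2 - (∏ i, (p i : ℤ)) * y ^ 2 = (q : ℤ) * w ^ 2) :
    Odd (univ.filter fun i => (q : ZMod (p i)) ^ ((p i - 1) / 4) = -1).card :=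
  stmt13_general t ht p q hp hq hinj hpq hp5 hq7 x y z w hgcd heq1 heq2
end
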